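/- Let K be a complete nonarchimedean (ultrametric) normed field of characteristic 0, let p be a prime with ‖p‖ = p^{-1} in K (e.g., K = ℂ_p), and let R = {c ∈ K : ‖c‖ ≤ 1} be its ring of integers. Let m ≥ 2 be an integer with p ∣ m, and let φ(x) ∈ x^m + x^{m+1}R[[x]]. Then the Böttcher coordinate f_φ converges on the disk D = {x ∈ K : ‖x‖ < p^{-1/(p-1)}·‖m‖} and its evaluation defines a bijective isometry f_φ : D → D, i.e., f_φ maps D onto D and ‖f_φ(x) − f_φ(y)‖ = ‖x − y‖ for all x, y ∈ D. -/

import Mathlib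

/-- Composition `f(g(x))` of formal power series, intended for `g` with zero
constant coefficient. -/
noncomputable def PowerSeries.comp {K : Type*} [CommSemiring K] (f g : PowerSeries K) :
    PowerSeries K :=
  PowerSeries.mk fun n =>
    PowerSeries.coeff n
      (∑ k ∈ Finset.range (n + 1), PowerSeries.C (PowerSeries.coeff k f) * g ^ k)

/-!
Write `f = X * g` and `ε = p ^ (-1 / (p - 1))`, so that `‖C(m, t)‖ * ε ^ (t - 1) ≤ ‖m‖` for
`t ≥ 1`. Comparing the coefficients of `X ^ (N + m)` in `φ(f) = f(X ^ m)` expresses `m * g_N`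
through the `g_i` with `i < N`, and the binomial estimate turns this into the bound
`‖g_N‖ * r ^ N ≤ ε` for the radius `r = ε * ‖m‖`, by strong induction on `N`.
On the disk `‖x‖ < r` the evaluated series then satisfies
`‖(f x - f y) - (x - y)‖ ≤ ε * ‖x - y‖`. In an ultrametric field this makes `f` an isometry of the
disk into itself, and `f z = y` is solved by the fixed point of the contraction
`z ↦ y - (f z - z)` of the closed ball of radius `‖y‖`.
-/

theorem pow_dvd_pow_succ_sub_pow_succ {R : Type*} [CommRing R] {x u v : R} {a N : ℕ}
    (hu : x ^ a ∣ u) (hv : x ^ a ∣ v) (huv : x ^ N ∣ u - v) (t : ℕ) :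
    x ^ (N + a * t) ∣ u ^ (t + 1) - v ^ (t + 1) := by
  induction t with
  | zero => simpa using huv
  | succ t ih =>
    rw [show u ^ (t + 2) - v ^ (t + 2) =
      u * (u ^ (t + 1) - v ^ (t + 1)) + (u - v) * v ^ (t + 1) by ring]
    refine dvd_add ?_ ?_
    · rw [show N + a * (t + 1) = a + (N + a * t) by ring, pow_add]
      exact mul_dvd_mul hu ih
    · rw [pow_add, pow_mul]
      exact mul_dvd_mul huv (pow_dvd_pow_of_dvd hv _)

theorem mul_pow_le_of_mul_pow_le_one {a r : ℝ} {i N : ℕ} (hr0 : 0 ≤ r) (hr1 : r ≤ 1)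
    (hi : i < N) (ha : 0 ≤ a) (h : a * r ^ i ≤ 1) : a * r ^ N ≤ r :=
  calc a * r ^ N ≤ a * r ^ (i + 1) := mul_le_mul_of_nonneg_left (pow_le_pow_of_le_one hr0 hr1 hi) ha
    _ = a * r ^ i * r := by ring
    _ ≤ r := mul_le_of_le_one_left hr0 h

namespace PowerSeries

section Comp

variable {R : Type*} [CommSemiring R]

theorem coeff_comp (φ g : R⟦X⟧) (n : ℕ) :
    coeff n (φ.comp g) = ∑ j ∈ Finset.range (n + 1), coeff j φ * coeff n (g ^ j) := by
  simp only [PowerSeries.comp, coeff_mk, map_sum, coeff_C_mul]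

theorem coeff_comp_X_pow (f : R⟦X⟧) {m : ℕ} (hm : 0 < m) (n : ℕ) :
    coeff n (f.comp (X ^ m)) = if m ∣ n then coeff (n / m) f else 0 := by
  simp only [coeff_comp, ← pow_mul, coeff_X_pow, mul_ite, mul_one, mul_zero]
  split_ifs with hdvd
  · obtain ⟨s, rfl⟩ := hdvd
    rw [Finset.sum_eq_single_of_mem s (Finset.mem_range.2 (by nlinarith))
      fun j _ hj => if_neg fun h => hj (Nat.eq_of_mul_eq_mul_left hm h).symm,
      if_pos rfl, Nat.mul_div_cancel_left s hm]
  · exact Finset.sum_eq_zero fun j _ => if_neg fun h => hdvd ⟨j, h⟩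

theorem coeff_comp_eq_coeff_pow_add_sum {φ : R⟦X⟧} {m n : ℕ}
    (hφlow : ∀ k < m, coeff k φ = 0) (hφlead : coeff m φ = 1) (hmn : m ≤ n) (g : R⟦X⟧) :
    coeff n (φ.comp g) =
      coeff n (g ^ m) + ∑ j ∈ Finset.Ico (m + 1) (n + 1), coeff j φ * coeff n (g ^ j) := by
  rw [coeff_comp, ← Finset.sum_range_add_sum_Ico _ (by omega : m ≤ n + 1),
    Finset.sum_eq_zero fun k hk => by rw [hφlow k (Finset.mem_range.1 hk), zero_mul],
    Finset.sum_eq_sum_Ico_succ_bot (by omega), hφlead, one_mul, zero_add]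

end Comp

section GaussNorm

variable {K : Type*} [NormedField K] [IsUltrametricDist K]

theorem norm_coeff_pow_mul_pow_le {u : K⟦X⟧} {r C : ℝ} (hr : 0 ≤ r)
    (hu : ∀ i, ‖coeff i u‖ * r ^ i ≤ C) (t n : ℕ) : ‖coeff n (u ^ t)‖ * r ^ n ≤ C ^ t := by
  induction t generalizing n with
  | zero =>
    rw [pow_zero, pow_zero, coeff_one]
    split_ifs with hn <;> simp [hn]
  | succ t ih =>
    have hC : 0 ≤ C := (by positivity : 0 ≤ ‖coeff 0 u‖ * r ^ 0).trans (hu 0)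
    obtain ⟨⟨a, b⟩, hab, hle⟩ := IsUltrametricDist.exists_norm_finsetSum_le_of_nonempty
      (t := Finset.HasAntidiagonal.antidiagonal n)
      ⟨(0, n), Finset.HasAntidiagonal.mem_antidiagonal.2 (zero_add n)⟩ fun x : ℕ × ℕ =>
        coeff x.1 (u ^ t) * coeff x.2 u
    rw [Finset.HasAntidiagonal.mem_antidiagonal] at hab
    rw [pow_succ, coeff_mul, pow_succ]
    calc ‖_‖ * r ^ n ≤ ‖coeff a (u ^ t) * coeff b u‖ * r ^ n := by gcongr
      _ = (‖coeff a (u ^ t)‖ * r ^ a) * (‖coeff b u‖ * r ^ b) := by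
        rw [norm_mul, ← hab, pow_add]; ring
      _ ≤ C ^ t * C := mul_le_mul (ih a) (hu b) (by positivity) (by positivity)

theorem norm_coeff_pow_mul_pow_le_of_lt {u : K⟦X⟧} {r C : ℝ} {a N t n : ℕ} (hr : 0 ≤ r)
    (hC : 0 ≤ C) (hu : X ^ a ∣ u) (hN : ∀ i < N, ‖coeff i u‖ * r ^ i ≤ C)
    (hn : n < N + a * t) : ‖coeff n (u ^ (t + 1))‖ * r ^ n ≤ C ^ (t + 1) := by
  set v : K⟦X⟧ := (trunc N u : K⟦X⟧)
  have hcoeff : ∀ i, coeff i v = if i < N then coeff i u else 0 := fun i => by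
    rw [Polynomial.coeff_coe, coeff_trunc]
  have hv : X ^ a ∣ v := X_pow_dvd_iff.2 fun i hi => by
    rw [hcoeff]; split_ifs <;> simp [X_pow_dvd_iff.1 hu i hi]
  have huv : X ^ N ∣ u - v := X_pow_dvd_iff.2 fun i hi => by
    rw [map_sub, hcoeff, if_pos hi, sub_self]
  have heq : coeff n (u ^ (t + 1)) = coeff n (v ^ (t + 1)) := sub_eq_zero.1 <| by
    rw [← map_sub]; exact X_pow_dvd_iff.1 (pow_dvd_pow_succ_sub_pow_succ hu hv huv t) n hn
  rw [heq]
  refine norm_coeff_pow_mul_pow_le hr (fun i => ?_) _ _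
  rw [hcoeff]
  split_ifs with hi
  · exact hN i hi
  · simpa using hC

theorem norm_coeff_X_mul_pow_mul_pow_le {g : K⟦X⟧} {r : ℝ} {N j n : ℕ} (hr0 : 0 ≤ r)
    (hr1 : r ≤ 1) (hg : ∀ i < N, ‖coeff i g‖ * r ^ i ≤ 1) (hj : 0 < j) (hjn : j ≤ n)
    (hn : n < N + j) : ‖coeff n ((X * g) ^ j)‖ * r ^ N ≤ r := by
  obtain ⟨t, rfl⟩ : ∃ t, j = t + 1 := ⟨j - 1, by omega⟩
  have h := norm_coeff_pow_mul_pow_le_of_lt (a := 0) (t := t) (n := n - (t + 1)) hr0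
    zero_le_one (by simp) hg (by omega)
  rw [one_pow] at h
  rw [mul_pow, coeff_X_pow_mul', if_pos hjn]
  exact mul_pow_le_of_mul_pow_le_one hr0 hr1 (by omega) (norm_nonneg _) h

end GaussNorm

section NormedField

variable {K : Type*} [NormedField K]

theorem norm_coeff_comp_X_pow_mul_pow_le {g : K⟦X⟧} {r : ℝ} {m N : ℕ} (hm : 2 ≤ m)
    (hN : N ≠ 0) (hr0 : 0 ≤ r) (hr1 : r ≤ 1)
    (hg : ∀ i, 0 < i → i < N → ‖coeff i g‖ * r ^ i ≤ 1) :
    ‖coeff (N + m) ((X * g).comp (X ^ m))‖ * r ^ N ≤ r := by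
  rw [coeff_comp_X_pow _ (by omega)]
  split_ifs with hdvd
  · obtain ⟨s, hs⟩ := hdvd
    obtain ⟨i, rfl⟩ := Nat.exists_eq_succ_of_ne_zero (n := s)
      (by rintro rfl; rw [mul_zero] at hs; omega)
    rw [hs, Nat.mul_div_cancel_left _ (by omega), coeff_succ_X_mul]
    rw [Nat.mul_succ] at hs
    have hi0 : 0 < i := Nat.pos_of_ne_zero (by rintro rfl; rw [mul_zero] at hs; omega)
    have hiN : i < N := by have := Nat.mul_le_mul_right i hm; omega
    exact mul_pow_le_of_mul_pow_le_one hr0 hr1 hiN (norm_nonneg _) (hg i hi0 hiN)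
  · simpa using hr0

end NormedField

end PowerSeries

theorem rpow_neg_one_div_sub_one_lt_one {p : ℝ} (hp : 1 < p) : p ^ (-1 / (p - 1)) < 1 :=
  Real.rpow_lt_one_of_one_lt_of_neg hp (div_neg_of_neg_of_pos (by norm_num) (by linarith))

section NatCast

variable {K : Type*} [NormedField K] [IsUltrametricDist K] {p : ℕ}

theorem norm_natCast_eq_one_of_not_dvd (hp : p.Prime) (hpK : ‖(p : K)‖ < 1) {u : ℕ}
    (hu : ¬ p ∣ u) : ‖(u : K)‖ = 1 := by
  refine le_antisymm (IsUltrametricDist.norm_natCast_le_one K u) (not_lt.1 fun huK => ?_)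
  obtain ⟨a, b, hab⟩ := Nat.isCoprime_iff_coprime.2 (hp.coprime_iff_not_dvd.2 hu)
  have hab' : (a : K) * p + b * u = 1 := by exact_mod_cast congrArg (Int.cast : ℤ → K) hab
  have hlt : ∀ (z : ℤ) {x : K}, ‖x‖ < 1 → ‖(z : K) * x‖ < 1 := fun z x hx => by
    rw [norm_mul]
    exact (mul_le_of_le_one_left (norm_nonneg x)
      (IsUltrametricDist.norm_intCast_le_one K z)).trans_lt hx
  have := (IsUltrametricDist.norm_add_le_max _ _).trans_lt (max_lt (hlt a hpK) (hlt b huK))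
  rw [hab', norm_one] at this
  exact lt_irrefl _ this

theorem norm_natCast_eq_norm_pow_factorization (hp : p.Prime) (hpK : ‖(p : K)‖ < 1) {t : ℕ}
    (ht : t ≠ 0) : ‖(t : K)‖ = ‖(p : K)‖ ^ t.factorization p := by
  conv_lhs => rw [← Nat.ordProj_mul_ordCompl_eq_self t p]
  rw [Nat.cast_mul, norm_mul, Nat.cast_pow, norm_pow,
    norm_natCast_eq_one_of_not_dvd hp hpK (Nat.not_dvd_ordCompl hp ht), mul_one]

theorem rpow_pow_le_norm_natCast (hp : p.Prime) (hpnorm : ‖(p : K)‖ = (p : ℝ)⁻¹) {t : ℕ}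
    (ht : t ≠ 0) : ((p : ℝ) ^ (-1 / ((p : ℝ) - 1))) ^ (t - 1) ≤ ‖(t : K)‖ := by
  have hp1 : (1 : ℝ) < p := by exact_mod_cast hp.one_lt
  set ε : ℝ := (p : ℝ) ^ (-1 / ((p : ℝ) - 1))
  have hε_pow : ε ^ (p - 1) = ‖(p : K)‖ := by
    rw [hpnorm, ← Real.rpow_natCast, ← Real.rpow_mul (by positivity),
      Nat.cast_sub hp.one_le, Nat.cast_one, div_mul_cancel₀ _ (by linarith), Real.rpow_neg_one]
  set v := t.factorization p
  -- Bernoulli: `1 + v (p - 1) ≤ p ^ v ≤ t`.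
  have hv : (p - 1) * v ≤ t - 1 := by
    have := one_add_le_pow_of_two_add_nonneg (a := p - 1) (by positivity) v
    rw [Nat.add_sub_cancel' hp.one_le, Nat.cast_id, mul_comm] at this
    have := this.trans (Nat.ordProj_le p ht)
    omega
  have hpK : ‖(p : K)‖ < 1 := by rw [hpnorm]; exact inv_lt_one_of_one_lt₀ hp1
  rw [norm_natCast_eq_norm_pow_factorization hp hpK ht, ← hε_pow, ← pow_mul]
  exact pow_le_pow_of_le_one (by positivity) (rpow_neg_one_div_sub_one_lt_one hp1).le hv

theorem norm_choose_mul_rpow_pow_le (hp : p.Prime) (hpnorm : ‖(p : K)‖ = (p : ℝ)⁻¹) (m : ℕ)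
    {t : ℕ} (ht : t ≠ 0) :
    ‖(m.choose t : K)‖ * ((p : ℝ) ^ (-1 / ((p : ℝ) - 1))) ^ (t - 1) ≤ ‖(m : K)‖ := by
  obtain ⟨t, rfl⟩ := Nat.exists_eq_succ_of_ne_zero ht
  cases m with
  | zero => simp
  | succ m =>
    have h := congrArg (fun z : ℕ => ‖(z : K)‖) (Nat.add_one_mul_choose_eq m t)
    simp only [Nat.cast_mul, norm_mul] at h
    calc ‖((m + 1).choose (t + 1) : K)‖ * _
        ≤ ‖((m + 1).choose (t + 1) : K)‖ * ‖((t + 1 : ℕ) : K)‖ :=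
          mul_le_mul_of_nonneg_left (rpow_pow_le_norm_natCast hp hpnorm ht) (norm_nonneg _)
      _ = ‖((m + 1 : ℕ) : K)‖ * ‖(m.choose t : K)‖ := h.symm
      _ ≤ ‖((m + 1 : ℕ) : K)‖ :=
          mul_le_of_le_one_right (norm_nonneg _) (IsUltrametricDist.norm_natCast_le_one K _)

end NatCast

section NormedAddCommGroup

variable {E : Type*} [NormedAddCommGroup E] {F : E → E} {r ε : ℝ}

theorem norm_sub_self_le_of_norm_sub_sub_le (hF0 : F 0 = 0)
    (hF : ∀ x, ‖x‖ < r → ∀ y, ‖y‖ < r → ‖F x - F y - (x - y)‖ ≤ ε * ‖x - y‖) {x : E}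
    (hx : ‖x‖ < r) : ‖F x - x‖ ≤ ε * ‖x‖ := by
  simpa [hF0] using hF x hx 0 (by simpa using (norm_nonneg x).trans_lt hx)

end NormedAddCommGroup

namespace IsUltrametricDist

section SeminormedAddCommGroup

variable {M : Type*} [SeminormedAddCommGroup M] [IsUltrametricDist M]

theorem norm_sub_le_max (x y : M) : ‖x - y‖ ≤ max ‖x‖ ‖y‖ := by
  simpa only [sub_eq_add_neg, norm_neg] using norm_add_le_max x (-y)

theorem norm_sub_mul_le {x y : M} {s C : ℝ} (hs : 0 ≤ s) (hx : ‖x‖ * s ≤ C)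
    (hy : ‖y‖ * s ≤ C) : ‖x - y‖ * s ≤ C :=
  (mul_le_mul_of_nonneg_right (norm_sub_le_max x y) hs).trans
    (by rw [max_mul_of_nonneg _ _ hs]; exact max_le hx hy)

theorem norm_sum_mul_le {ι : Type*} {t : Finset ι} {f : ι → M} {s C : ℝ} (hs : 0 ≤ s)
    (hC : 0 ≤ C) (h : ∀ i ∈ t, ‖f i‖ * s ≤ C) : ‖∑ i ∈ t, f i‖ * s ≤ C := by
  rcases t.eq_empty_or_nonempty with rfl | ht
  · simpa using hC
  obtain ⟨i, hi, hle⟩ := exists_norm_finsetSum_le_of_nonempty ht f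
  exact (mul_le_mul_of_nonneg_right hle hs).trans (h i hi)

end SeminormedAddCommGroup

section NormedAddCommGroup

variable {E : Type*} [NormedAddCommGroup E] [IsUltrametricDist E]

theorem norm_eq_of_norm_sub_le_mul {x y : E} {ε : ℝ} (hε : ε < 1) (h : ‖x - y‖ ≤ ε * ‖y‖) :
    ‖x‖ = ‖y‖ := by
  rcases eq_or_ne y 0 with rfl | hy
  · simpa using h
  · have hlt : ‖x - y‖ < ‖y‖ := h.trans_lt (mul_lt_of_lt_one_left (norm_pos_iff.2 hy) hε)
    rw [← sub_add_cancel x y, norm_add_eq_max_of_norm_ne_norm hlt.ne, max_eq_right hlt.le]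

variable [CompleteSpace E] {F : E → E} {r ε : ℝ}

theorem surjOn_of_norm_sub_sub_le (hε : ε < 1) (hF0 : F 0 = 0)
    (hF : ∀ x, ‖x‖ < r → ∀ y, ‖y‖ < r → ‖F x - F y - (x - y)‖ ≤ ε * ‖x - y‖) :
    Set.SurjOn F {x | ‖x‖ < r} {x | ‖x‖ < r} := by
  intro y (hy : ‖y‖ < r)
  set s := Metric.closedBall (0 : E) ‖y‖
  have hs : ∀ z ∈ s, ‖z‖ < r := fun z hz => (mem_closedBall_zero_iff.1 hz).trans_lt hy
  set T : E → E := fun z => y - (F z - z)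
  have hT : Set.MapsTo T s s := fun z hz => by
    refine mem_closedBall_zero_iff.2 ((norm_sub_le_max _ _).trans (max_le le_rfl ?_))
    exact (norm_sub_self_le_of_norm_sub_sub_le hF0 hF (hs z hz)).trans
      ((mul_le_of_le_one_left (norm_nonneg z) hε.le).trans (mem_closedBall_zero_iff.1 hz))
  have hTc : ContractingWith ε.toNNReal (hT.restrict T s s) := by
    refine ⟨Real.toNNReal_lt_one.2 hε, LipschitzWith.of_dist_le_mul fun a b => ?_⟩
    rw [Subtype.dist_eq, Subtype.dist_eq, dist_eq_norm, dist_eq_norm, norm_sub_rev (a : E)]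
    have hab : T a - T b = F b - F a - (b - a) := by simp only [T]; abel
    simp only [Set.MapsTo.val_restrict_apply, hab]
    exact (hF b (hs b b.2) a (hs a a.2)).trans
      (mul_le_mul_of_nonneg_right (Real.le_coe_toNNReal ε) (norm_nonneg _))
  obtain ⟨z, hz, hfix, -⟩ := hTc.exists_fixedPoint' Metric.isClosed_closedBall.isComplete hT
    (Metric.mem_closedBall_self (norm_nonneg y)) (edist_ne_top _ _)
  have hFz : y - (F z - z) = z := hfix
  rw [sub_eq_iff_eq_add, add_sub_cancel] at hFz
  exact ⟨z, hs z hz, hFz.symm⟩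

theorem bijOn_of_norm_sub_sub_le (hε : ε < 1) (hF0 : F 0 = 0)
    (hF : ∀ x, ‖x‖ < r → ∀ y, ‖y‖ < r → ‖F x - F y - (x - y)‖ ≤ ε * ‖x - y‖) :
    Set.BijOn F {x | ‖x‖ < r} {x | ‖x‖ < r} := by
  refine ⟨fun x (hx : ‖x‖ < r) => ?_, fun x hx y hy hxy => ?_,
    surjOn_of_norm_sub_sub_le hε hF0 hF⟩
  · show ‖F x‖ < r
    rwa [norm_eq_of_norm_sub_le_mul hε (norm_sub_self_le_of_norm_sub_sub_le hF0 hF hx)]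
  · have := norm_eq_of_norm_sub_le_mul hε (hF x hx y hy)
    rw [hxy, sub_self, norm_zero] at this
    exact sub_eq_zero.1 (norm_eq_zero.1 this.symm)

end NormedAddCommGroup

end IsUltrametricDist

section PowerSeriesEval

variable {K : Type*} [NormedField K] [IsUltrametricDist K]

theorem norm_pow_succ_sub_pow_succ_le (x y : K) (k : ℕ) :
    ‖x ^ (k + 1) - y ^ (k + 1)‖ ≤ ‖x - y‖ * max ‖x‖ ‖y‖ ^ k := by
  induction k with
  | zero => simp
  | succ k ih =>
    rw [show x ^ (k + 2) - y ^ (k + 2) = x * (x ^ (k + 1) - y ^ (k + 1)) + (x - y) * y ^ (k + 1)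
      by ring]
    refine (IsUltrametricDist.norm_add_le_max _ _).trans (max_le ?_ ?_)
    · calc ‖x * (x ^ (k + 1) - y ^ (k + 1))‖ ≤ max ‖x‖ ‖y‖ * (‖x - y‖ * max ‖x‖ ‖y‖ ^ k) := by
            rw [norm_mul]; gcongr; exact le_max_left _ _
        _ = ‖x - y‖ * max ‖x‖ ‖y‖ ^ (k + 1) := by ring
    · rw [norm_mul, norm_pow]
      gcongr
      exact le_max_right _ _

theorem summable_mul_pow_of_norm_mul_pow_le [CompleteSpace K] {c : ℕ → K} {r ε : ℝ}
    (hc : ∀ k, 2 ≤ k → ‖c k‖ * r ^ (k - 1) ≤ ε) {x : K} (hx : ‖x‖ < r) :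
    Summable fun k => c k * x ^ k := by
  have hr : 0 < r := (norm_nonneg x).trans_lt hx
  refine NonarchimedeanAddGroup.summable_of_tendsto_cofinite_zero ?_
  rw [Nat.cofinite_eq_atTop]
  have hgeom : Filter.Tendsto (fun k => ε * r * (‖x‖ / r) ^ k) Filter.atTop (nhds 0) := by
    simpa using (tendsto_pow_atTop_nhds_zero_of_lt_one (by positivity)
      ((div_lt_one hr).2 hx)).const_mul (ε * r)
  refine squeeze_zero_norm' (Filter.eventually_atTop.2 ⟨2, fun k hk => ?_⟩) hgeom
  calc ‖c k * x ^ k‖ = ‖c k‖ * r ^ (k - 1) * r * (‖x‖ / r) ^ k := by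
        rw [norm_mul, norm_pow, mul_assoc (‖c k‖), pow_sub_one_mul (by omega), div_pow]
        field_simp
    _ ≤ ε * r * (‖x‖ / r) ^ k := by gcongr; exact hc k hk

theorem norm_tsum_sub_tsum_sub_le {c : ℕ → K} {r ε : ℝ} (hc0 : c 0 = 0) (hc1 : c 1 = 1)
    (hc : ∀ k, 2 ≤ k → ‖c k‖ * r ^ (k - 1) ≤ ε) {x y : K} (hx : ‖x‖ < r) (hy : ‖y‖ < r)
    (hsx : Summable fun k => c k * x ^ k) (hsy : Summable fun k => c k * y ^ k) :
    ‖(∑' k, c k * x ^ k) - (∑' k, c k * y ^ k) - (x - y)‖ ≤ ε * ‖x - y‖ := by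
  have hr : 0 ≤ r := (norm_nonneg x).trans hx.le
  have hε : 0 ≤ ε := (mul_nonneg (norm_nonneg _) (pow_nonneg hr _)).trans (hc 2 le_rfl)
  have hsum := (hsx.hasSum.sub hsy.hasSum).sub (hasSum_ite_eq 1 (x - y))
  rw [← hsum.tsum_eq]
  refine IsUltrametricDist.norm_tsum_le_of_forall_le_of_nonneg (by positivity) fun k => ?_
  match k with
  | 0 => simpa [hc0] using by positivity
  | 1 => simpa [hc1] using by positivity
  | j + 2 =>
    rw [if_neg (by omega), sub_zero, ← mul_sub, norm_mul]
    calc ‖c (j + 2)‖ * ‖x ^ (j + 2) - y ^ (j + 2)‖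
        ≤ ‖c (j + 2)‖ * (‖x - y‖ * max ‖x‖ ‖y‖ ^ (j + 1)) := by
          gcongr; exact norm_pow_succ_sub_pow_succ_le x y (j + 1)
      _ ≤ ‖c (j + 2)‖ * (‖x - y‖ * r ^ (j + 1)) := by gcongr; exact (max_lt hx hy).le
      _ = ‖c (j + 2)‖ * r ^ (j + 2 - 1) * ‖x - y‖ := by
          rw [show j + 2 - 1 = j + 1 by omega]; ring
      _ ≤ ε * ‖x - y‖ := by gcongr; exact hc _ (by omega)

end PowerSeriesEval

section Bottcher

open PowerSeries

variable {K : Type*} [NormedField K] [IsUltrametricDist K] {p : ℕ}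

theorem norm_coeff_pow_sub_mul_coeff_le (hp : p.Prime) (hpnorm : ‖(p : K)‖ = (p : ℝ)⁻¹)
    {g : K⟦X⟧} (hg0 : coeff 0 g = 1) {r : ℝ} (hr : 0 ≤ r) {N : ℕ} (hN : N ≠ 0)
    (hg : ∀ i, 0 < i → i < N → ‖coeff i g‖ * r ^ i ≤ (p : ℝ) ^ (-1 / ((p : ℝ) - 1))) (m : ℕ) :
    ‖coeff N (g ^ m) - m * coeff N g‖ * r ^ N ≤ (p : ℝ) ^ (-1 / ((p : ℝ) - 1)) * ‖(m : K)‖ := by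
  set ε : ℝ := (p : ℝ) ^ (-1 / ((p : ℝ) - 1))
  have hε : 0 ≤ ε := by positivity
  rw [coeff_zero_eq_constantCoeff_apply] at hg0
  set w := g - 1
  have hw : X ^ 1 ∣ w := by rw [pow_one, X_dvd_iff]; simp [w, hg0]
  have hwN : ∀ i < N, ‖coeff i w‖ * r ^ i ≤ ε := by
    intro i hi
    rcases Nat.eq_zero_or_pos i with rfl | hi0
    · simpa [w, hg0] using hε
    · simpa [w, coeff_one, hi0.ne'] using hg i hi0 hi
  cases m with
  | zero => simp [coeff_one, hN]
  | succ m =>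
    have hsplit : coeff N (g ^ (m + 1)) - ((m + 1 : ℕ) : K) * coeff N g =
        ∑ t ∈ Finset.range m, ((m + 1).choose (t + 2) : K) * coeff N (w ^ (t + 2)) := by
      rw [show g = w + 1 by simp [w], add_pow, map_sum, Finset.sum_range_succ',
        Finset.sum_range_succ']
      simp only [one_pow, mul_one, pow_zero, zero_add, pow_one, Nat.choose_zero_right,
        Nat.choose_one_right, ← map_natCast (C (R := K)), coeff_mul_C, coeff_one, if_neg hN,
        map_add, zero_mul, add_zero, mul_comm _ (coeff N w), add_sub_cancel_right]
      exact Finset.sum_congr rfl fun t _ => mul_comm _ _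
    rw [hsplit]
    refine IsUltrametricDist.norm_sum_mul_le (by positivity) (by positivity) fun t _ => ?_
    have hcoeff := norm_coeff_pow_mul_pow_le_of_lt hr hε hw hwN
      (show N < N + 1 * (t + 1) by omega)
    have hchoose := norm_choose_mul_rpow_pow_le (K := K) hp hpnorm (m + 1) (t := t + 2) (by omega)
    calc ‖((m + 1).choose (t + 2) : K) * coeff N (w ^ (t + 2))‖ * r ^ N
        = (‖coeff N (w ^ (t + 1 + 1))‖ * r ^ N) * ‖((m + 1).choose (t + 2) : K)‖ := by
          rw [norm_mul]; ring
      _ ≤ ε ^ (t + 1 + 1) * ‖((m + 1).choose (t + 2) : K)‖ := by gcongr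
      _ = ε * (‖((m + 1).choose (t + 2) : K)‖ * ε ^ (t + 2 - 1)) := by
          rw [show t + 2 - 1 = t + 1 by omega]; ring
      _ ≤ ε * ‖((m + 1 : ℕ) : K)‖ := by gcongr

theorem norm_coeff_mul_pow_le_of_forall_lt (hp : p.Prime) (hpnorm : ‖(p : K)‖ = (p : ℝ)⁻¹)
    {m : ℕ} (hm : 2 ≤ m) {φ : K⟦X⟧} (hφint : ∀ k, ‖coeff k φ‖ ≤ 1)
    (hφlow : ∀ k < m, coeff k φ = 0) (hφlead : coeff m φ = 1)
    {g : K⟦X⟧} (hg0 : coeff 0 g = 1) (hfB : φ.comp (X * g) = (X * g).comp (X ^ m))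
    {N : ℕ} (hN : N ≠ 0)
    (ih : ∀ i, 0 < i → i < N →
      ‖coeff i g‖ * ((p : ℝ) ^ (-1 / ((p : ℝ) - 1)) * ‖(m : K)‖) ^ i ≤
        (p : ℝ) ^ (-1 / ((p : ℝ) - 1))) :
    ‖coeff N g‖ * ((p : ℝ) ^ (-1 / ((p : ℝ) - 1)) * ‖(m : K)‖) ^ N ≤
      (p : ℝ) ^ (-1 / ((p : ℝ) - 1)) := by
  set ε : ℝ := (p : ℝ) ^ (-1 / ((p : ℝ) - 1))
  set r := ε * ‖(m : K)‖
  have hp1 : (1 : ℝ) < p := by exact_mod_cast hp.one_lt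
  have hε0 : 0 < ε := Real.rpow_pos_of_pos (by linarith) _
  have hε1 : ε ≤ 1 := (rpow_neg_one_div_sub_one_lt_one hp1).le
  have hM : 0 < ‖(m : K)‖ :=
    (pow_pos hε0 _).trans_le (rpow_pow_le_norm_natCast hp hpnorm (by omega : m ≠ 0))
  have hr0 : 0 < r := by positivity
  have hr1 : r ≤ 1 := mul_le_one₀ hε1 hM.le (IsUltrametricDist.norm_natCast_le_one K m)
  have hg1 : ∀ i < N, ‖coeff i g‖ * r ^ i ≤ 1 := by
    intro i hi
    rcases Nat.eq_zero_or_pos i with rfl | hi0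
    · simp [hg0]
    · exact (ih i hi0 hi).trans hε1
  -- The coefficient of `X ^ (N + m)` in `φ(X g) = (X g)(X ^ m)`: only the `j = m` term of
  -- `φ(X g)` involves `g_N`, through `m * g_N`.
  have key : (m : K) * coeff N g = coeff (N + m) ((X * g).comp (X ^ m)) -
      (coeff N (g ^ m) - m * coeff N g) -
      ∑ j ∈ Finset.Ico (m + 1) (N + m + 1), coeff j φ * coeff (N + m) ((X * g) ^ j) := by
    have h := coeff_comp_eq_coeff_pow_add_sum hφlow hφlead (by omega : m ≤ N + m) (X * g)
    rw [hfB, mul_pow, coeff_X_pow_mul', if_pos (by omega), Nat.add_sub_cancel] at h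
    rw [h]; ring
  have hmN : ‖(m : K) * coeff N g‖ * r ^ N ≤ r := by
    rw [key]
    refine IsUltrametricDist.norm_sub_mul_le (by positivity)
      (IsUltrametricDist.norm_sub_mul_le (by positivity) ?_ ?_)
      (IsUltrametricDist.norm_sum_mul_le (by positivity) hr0.le fun j hj => ?_)
    · exact norm_coeff_comp_X_pow_mul_pow_le hm hN hr0.le hr1 fun i hi0 hiN =>
        (ih i hi0 hiN).trans hε1
    · exact norm_coeff_pow_sub_mul_coeff_le hp hpnorm hg0 hr0.le hN ih m
    · obtain ⟨hj1, hj2⟩ := Finset.mem_Ico.1 hj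
      rw [norm_mul, mul_assoc]
      exact (mul_le_of_le_one_left (by positivity) (hφint j)).trans
        (norm_coeff_X_mul_pow_mul_pow_le hr0.le hr1 hg1 (by omega) (by omega) (by omega))
  rw [norm_mul, mul_assoc] at hmN
  exact le_of_mul_le_mul_left (hmN.trans_eq (mul_comm ε _)) hM

theorem norm_coeff_mul_pow_le_of_comp_eq (hp : p.Prime) (hpnorm : ‖(p : K)‖ = (p : ℝ)⁻¹)
    {m : ℕ} (hm : 2 ≤ m) {φ : K⟦X⟧} (hφint : ∀ k, ‖coeff k φ‖ ≤ 1)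
    (hφlow : ∀ k < m, coeff k φ = 0) (hφlead : coeff m φ = 1)
    {f : K⟦X⟧} (hf0 : coeff 0 f = 0) (hf1 : coeff 1 f = 1) (hfB : φ.comp f = f.comp (X ^ m))
    (k : ℕ) (hk : 2 ≤ k) :
    ‖coeff k f‖ * ((p : ℝ) ^ (-1 / ((p : ℝ) - 1)) * ‖(m : K)‖) ^ (k - 1) ≤
      (p : ℝ) ^ (-1 / ((p : ℝ) - 1)) := by
  obtain ⟨g, rfl⟩ : X ∣ f := X_dvd_iff.2 (by rwa [← coeff_zero_eq_constantCoeff_apply])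
  have hg : ∀ N, N ≠ 0 → ‖coeff N g‖ * ((p : ℝ) ^ (-1 / ((p : ℝ) - 1)) * ‖(m : K)‖) ^ N ≤
      (p : ℝ) ^ (-1 / ((p : ℝ) - 1)) := by
    intro N
    induction N using Nat.strong_induction_on with
    | _ N ih =>
      exact fun hN => norm_coeff_mul_pow_le_of_forall_lt hp hpnorm hm hφint hφlow hφlead
        ((coeff_succ_X_mul 0 g).symm.trans hf1) hfB hN fun i hi0 hiN => ih i hiN hi0.ne'
  obtain ⟨N, rfl⟩ : ∃ N, k = N + 1 := ⟨k - 1, by omega⟩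
  rw [coeff_succ_X_mul, Nat.add_sub_cancel]
  exact hg N (by omega)

end Bottcher

theorem bottcher_isometry_of_dvd_general {K : Type*} [NormedField K] [CompleteSpace K]
    [IsUltrametricDist K]
    (p : ℕ) (hp : p.Prime) (hpnorm : ‖(p : K)‖ = (p : ℝ)⁻¹)
    (m : ℕ) (hm : 2 ≤ m)
    (φ : PowerSeries K) (hφint : ∀ k, ‖PowerSeries.coeff k φ‖ ≤ 1)
    (hφlow : ∀ k < m, PowerSeries.coeff k φ = 0)
    (hφlead : PowerSeries.coeff m φ = 1)
    (f : PowerSeries K) (hf0 : PowerSeries.coeff 0 f = 0)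
    (hf1 : PowerSeries.coeff 1 f = 1)
    (hfB : φ.comp f = f.comp (PowerSeries.X ^ m)) :
    ∃ F : {x : K // ‖x‖ < (p : ℝ) ^ (-1 / ((p : ℝ) - 1)) * ‖(m : K)‖} →
        {x : K // ‖x‖ < (p : ℝ) ^ (-1 / ((p : ℝ) - 1)) * ‖(m : K)‖},
      Function.Bijective F ∧
      (∀ x : {x : K // ‖x‖ < (p : ℝ) ^ (-1 / ((p : ℝ) - 1)) * ‖(m : K)‖},
        HasSum (fun k => PowerSeries.coeff k f * (x : K) ^ k) (F x : K)) ∧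
      ∀ x y : {x : K // ‖x‖ < (p : ℝ) ^ (-1 / ((p : ℝ) - 1)) * ‖(m : K)‖},
        ‖(F x : K) - (F y : K)‖ = ‖(x : K) - (y : K)‖ := by
  have hε := rpow_neg_one_div_sub_one_lt_one (p := p) (by exact_mod_cast hp.one_lt)
  have hc := norm_coeff_mul_pow_le_of_comp_eq hp hpnorm hm hφint hφlow hφlead hf0 hf1 hfB
  have hsum := fun (x : K) => summable_mul_pow_of_norm_mul_pow_le (x := x) hc
  have hF := fun x hx y hy => norm_tsum_sub_tsum_sub_le hf0 hf1 hc hx hy (hsum x hx) (hsum y hy)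
  have hF0 : ∑' k, PowerSeries.coeff k f * (0 : K) ^ k = 0 := by
    rw [tsum_eq_single 0 fun k hk => by simp [hk]]; simp [hf0]
  have hbij := IsUltrametricDist.bijOn_of_norm_sub_sub_le hε hF0 hF
  exact ⟨hbij.mapsTo.restrict _ _ _, hbij.bijective, fun x => (hsum x x.2).hasSum,
    fun x y => IsUltrametricDist.norm_eq_of_norm_sub_le_mul hε (hF x x.2 y y.2)⟩

/-- For `p ∣ m` and `φ ∈ x^m + x^{m+1}R[[x]]` over a complete
nonarchimedean field with `‖p‖ = 1/p`, the Böttcher coordinate converges on the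
disk of radius `p^{-1/(p-1)}·‖m‖` and defines a bijective isometry of that disk
to itself. -/
theorem bottcher_isometry_of_dvd {K : Type*} [NormedField K] [CompleteSpace K]
    [IsUltrametricDist K] [CharZero K]
    (p : ℕ) (hp : p.Prime) (hpnorm : ‖(p : K)‖ = (p : ℝ)⁻¹)
    (m : ℕ) (hm : 2 ≤ m) (hpm : p ∣ m)
    (φ : PowerSeries K) (hφint : ∀ k, ‖PowerSeries.coeff k φ‖ ≤ 1)
    (hφlow : ∀ k < m, PowerSeries.coeff k φ = 0)
    (hφlead : PowerSeries.coeff m φ = 1)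
    (f : PowerSeries K) (hf0 : PowerSeries.coeff 0 f = 0)
    (hf1 : PowerSeries.coeff 1 f = 1)
    (hfB : φ.comp f = f.comp (PowerSeries.X ^ m)) :
    ∃ F : {x : K // ‖x‖ < (p : ℝ) ^ (-1 / ((p : ℝ) - 1)) * ‖(m : K)‖} →
        {x : K // ‖x‖ < (p : ℝ) ^ (-1 / ((p : ℝ) - 1)) * ‖(m : K)‖},
      Function.Bijective F ∧
      (∀ x : {x : K // ‖x‖ < (p : ℝ) ^ (-1 / ((p : ℝ) - 1)) * ‖(m : K)‖},
        HasSum (fun k => PowerSeries.coeff k f * (x : K) ^ k) (F x : K)) ∧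
      ∀ x y : {x : K // ‖x‖ < (p : ℝ) ^ (-1 / ((p : ℝ) - 1)) * ‖(m : K)‖},
        ‖(F x : K) - (F y : K)‖ = ‖(x : K) - (y : K)‖ :=
  bottcher_isometry_of_dvd_general p hp hpnorm m hm φ hφint hφlow hφlead f hf0 hf1 hfB
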